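/- For a multigraph G on n ≥ 2 vertices, G is k-maximal if and only if τ(G) = κ̄'(G) = k. -/

import Mathlib

open Finset

/-- A finite multigraph: a finite vertex set, a finite set of edge names,
and an endpoint assignment sending each edge to an unordered pair of vertices. -/
structure MG (α β : Type) where
  verts : Finset α
  edges : Finset β
  ends : β → Sym2 α
  wf : ∀ e ∈ edges, ∀ v ∈ ends e, v ∈ verts

variable {α β : Type} [DecidableEq α] [DecidableEq β]

namespace MG

def Adj (G : MG α β) (a b : α) : Prop := ∃ e ∈ G.edges, G.ends e = s(a, b)

def Reach (G : MG α β) : α → α → Prop := Relation.ReflTransGen G.Adj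

def Connected (G : MG α β) : Prop :=
  G.verts.Nonempty ∧ ∀ a ∈ G.verts, ∀ b ∈ G.verts, G.Reach a b

/-- Number of connected components. -/
noncomputable def omega (G : MG α β) : ℕ :=
  ((fun v => {u | G.Reach v u}) '' (G.verts : Set α)).ncard

def deleteEdges (G : MG α β) (X : Finset β) : MG α β :=
  ⟨G.verts, G.edges \ X, G.ends, fun e he => G.wf e (Finset.mem_sdiff.mp he).1⟩

def IsSubgraph (H G : MG α β) : Prop :=
  H.verts ⊆ G.verts ∧ H.edges ⊆ G.edges ∧ ∀ e ∈ H.edges, H.ends e = G.ends e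

def IsSpanningTree (G T : MG α β) : Prop :=
  IsSubgraph T G ∧ T.verts = G.verts ∧ T.Connected ∧ T.edges.card = T.verts.card - 1

/-- `G` contains `m` pairwise edge-disjoint spanning trees. -/
def HasTrees (G : MG α β) (m : ℕ) : Prop :=
  ∃ T : Fin m → MG α β, (∀ i, IsSpanningTree G (T i)) ∧
    ∀ i j, i ≠ j → Disjoint (T i).edges (T j).edges

/-- Maximum number of pairwise edge-disjoint spanning trees. -/
noncomputable def tau (G : MG α β) : ℕ := sSup {m | G.HasTrees m}

noncomputable def taubar (G : MG α β) : ℕ :=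
  sSup {m | ∃ H : MG α β, IsSubgraph H G ∧ H.Connected ∧ tau H = m}

/-- Edge connectivity: the least size of an edge set whose deletion disconnects. -/
noncomputable def kappa (G : MG α β) : ℕ :=
  sInf {n | ∃ X ⊆ G.edges, X.card = n ∧ ¬ (G.deleteEdges X).Connected}

noncomputable def kappabar (G : MG α β) : ℕ :=
  sSup {n | ∃ H : MG α β, IsSubgraph H G ∧ kappa H = n}

/-- Density `|E(G)| / (|V(G)| - ω(G))`. -/
noncomputable def dens (G : MG α β) : ℝ :=
  (G.edges.card : ℝ) / ((G.verts.card : ℝ) - (G.omega : ℝ))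

/-- Maximum density over nontrivial subgraphs. -/
noncomputable def gamma (G : MG α β) : ℝ :=
  sSup {x : ℝ | ∃ H : MG α β, IsSubgraph H G ∧ H.edges.Nonempty ∧ dens H = x}

noncomputable def eta (G : MG α β) : ℝ :=
  sInf {x : ℝ | ∃ X : Finset β, X ⊆ G.edges ∧ G.omega < (G.deleteEdges X).omega ∧
    x = (X.card : ℝ) / (((G.deleteEdges X).omega : ℝ) - (G.omega : ℝ))}

/-- A (minimal) edge cut. -/
def IsEdgeCut (G : MG α β) (X : Finset β) : Prop :=
  X ⊆ G.edges ∧ ¬ (G.deleteEdges X).Connected ∧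
    ∀ Y : Finset β, Y ⊂ X → (G.deleteEdges Y).Connected

def addEdge (G : MG α β) (e : β) (a b : α) (ha : a ∈ G.verts) (hb : b ∈ G.verts) :
    MG α β :=
  ⟨G.verts, insert e G.edges, Function.update G.ends e s(a, b), by
    intro f hf v hv
    by_cases hfe : f = e
    · subst hfe
      rw [Function.update_self] at hv
      rcases Sym2.mem_iff.mp hv with h | h <;> subst h <;> assumption
    · rw [Function.update_of_ne hfe] at hv
      exact G.wf f ((Finset.mem_insert.mp hf).resolve_left hfe) v hv⟩

/-- `G` is `k`-maximal: every subgraph has edge connectivity at most `k`, but adding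
any new edge between two distinct vertices creates a subgraph of edge connectivity
at least `k+1`. -/
def IsKMaximal (k : ℕ) (G : MG α β) : Prop :=
  G.kappabar ≤ k ∧
    ∀ (e : β) (_ : e ∉ G.edges) (a b : α) (ha : a ∈ G.verts) (hb : b ∈ G.verts),
      a ≠ b → k + 1 ≤ (G.addEdge e a b ha hb).kappabar

def IsK1 (G : MG α β) : Prop := G.verts.card = 1 ∧ G.edges = ∅

/-- `G` is the `k`-edge-join of `G₁` and `G₂`. -/
def IsEdgeJoin (G G₁ G₂ : MG α β) (k : ℕ) : Prop :=
  Disjoint G₁.verts G₂.verts ∧ IsSubgraph G₁ G ∧ IsSubgraph G₂ G ∧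
  G.verts = G₁.verts ∪ G₂.verts ∧
  ∃ K : Finset β, K.card = k ∧ Disjoint K (G₁.edges ∪ G₂.edges) ∧
    G.edges = G₁.edges ∪ G₂.edges ∪ K ∧
    ∀ e ∈ K, ∃ a ∈ G₁.verts, ∃ b ∈ G₂.verts, G.ends e = s(a, b)

def UniformlyDense (G : MG α β) (k : ℕ) : Prop := dens G = k ∧ gamma G = k

/-- Membership in `𝓕_{k,n}` : `κ' = τ = k`, `n` vertices, with `|E|` minimized. -/
def InFkn (G : MG α β) (k n : ℕ) : Prop :=
  kappa G = k ∧ tau G = k ∧ G.verts.card = n ∧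
    ∀ H : MG α β, kappa H = k ∧ tau H = k ∧ H.verts.card = n →
      G.edges.card ≤ H.edges.card

def InFk (G : MG α β) (k : ℕ) : Prop := ∃ n, 1 < n ∧ InFkn G k n

end MG
open scoped Classical
set_option linter.unusedSectionVars false

namespace MG

variable {α β : Type} [DecidableEq α] [DecidableEq β]

/-- `z` is a crossing pair w.r.t. vertex set `A`. -/
def Cross (A : Set α) (z : Sym2 α) : Prop := ∃ p q, z = s(p, q) ∧ p ∈ A ∧ q ∉ A

lemma sym2_cases (z : Sym2 α) : ∃ x y, z = s(x, y) :=
  Sym2.ind (fun x y => ⟨x, y, rfl⟩) z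

lemma adj_symm {G : MG α β} {a b : α} (h : G.Adj a b) : G.Adj b a := by
  obtain ⟨e, he, hee⟩ := h
  exact ⟨e, he, by rw [hee, Sym2.eq_swap]⟩

lemma reach_symm {G : MG α β} {a b : α} (h : G.Reach a b) : G.Reach b a := by
  induction h with
  | refl => exact Relation.ReflTransGen.refl
  | tail _ hadj ih => exact (Relation.ReflTransGen.single (adj_symm hadj)).trans ih

lemma reach_mono {H K : MG α β} (h : ∀ a b, H.Adj a b → K.Adj a b) {a b : α}
    (hr : H.Reach a b) : K.Reach a b :=
  Relation.ReflTransGen.mono h _ _ hr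

/-- If no edge crosses `A`, reachability stays inside `A`. -/
lemma reach_stays {G : MG α β} {A : Set α} (h : ∀ g ∈ G.edges, ¬ Cross A (G.ends g))
    {a b : α} (hr : G.Reach a b) (ha : a ∈ A) : b ∈ A := by
  induction hr with
  | refl => exact ha
  | tail _ hadj ih =>
      obtain ⟨g, hg, hge⟩ := hadj
      by_contra hb
      exact h g hg ⟨_, _, hge, ih, hb⟩

/-- If `a ∈ A` reaches `b ∉ A` then some edge crosses `A`. -/
lemma exists_cross {G : MG α β} {A : Set α} {a b : α} (hr : G.Reach a b)
    (ha : a ∈ A) (hb : b ∉ A) : ∃ g ∈ G.edges, Cross A (G.ends g) := by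
  induction hr with
  | refl => exact absurd ha hb
  | @tail c d hrc hadj ih =>
      by_cases hc : c ∈ A
      · obtain ⟨g, hg, hge⟩ := hadj
        exact ⟨g, hg, _, _, hge, hc, hb⟩
      · exact ih hc

lemma subgraph_refl (G : MG α β) : IsSubgraph G G :=
  ⟨Finset.Subset.refl _, Finset.Subset.refl _, fun _ _ => rfl⟩

lemma subgraph_trans {H K G : MG α β} (h1 : IsSubgraph H K) (h2 : IsSubgraph K G) :
    IsSubgraph H G :=
  ⟨h1.1.trans h2.1, h1.2.1.trans h2.2.1,
   fun e he => (h1.2.2 e he).trans (h2.2.2 e (h1.2.1 he))⟩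

lemma not_connected_of {G : MG α β} {u w : α} (hu : u ∈ G.verts) (hw : w ∈ G.verts)
    (h : ¬ G.Reach u w) : ¬ G.Connected := fun ⟨_, hc⟩ => h (hc u hu w hw)

lemma disconnected_delete_all {G : MG α β} (h2 : 2 ≤ G.verts.card) :
    ¬ (G.deleteEdges G.edges).Connected := by
  obtain ⟨a, ha, b, hb, hab⟩ := Finset.one_lt_card.mp h2
  refine not_connected_of (G := G.deleteEdges G.edges) ha hb (fun hr => hab ?_)
  have : ∀ x y, (G.deleteEdges G.edges).Reach x y → x = y := by
    intro x y h
    induction h with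
    | refl => rfl
    | tail _ hadj ih =>
        obtain ⟨g, hg, _⟩ := hadj
        simp [deleteEdges] at hg
  exact this a b hr

/-- Two distinct vertices unreachable after deleting `X`: gives disconnection. -/
lemma exists_unreachable {G : MG α β} (h : ¬ G.Connected) (hne : G.verts.Nonempty) :
    ∃ u ∈ G.verts, ∃ w ∈ G.verts, ¬ G.Reach u w := by
  by_contra hc
  push_neg at hc
  exact h ⟨hne, hc⟩

end MG
namespace MG
variable {α β : Type} [DecidableEq α] [DecidableEq β]

lemma kappa_le {G : MG α β} {X : Finset β} (hX : X ⊆ G.edges)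
    (hd : ¬ (G.deleteEdges X).Connected) : G.kappa ≤ X.card :=
  Nat.sInf_le ⟨X, hX, rfl, hd⟩

lemma kset_nonempty {G : MG α β} (h2 : 2 ≤ G.verts.card) :
    {n | ∃ X ⊆ G.edges, X.card = n ∧ ¬ (G.deleteEdges X).Connected}.Nonempty :=
  ⟨G.edges.card, G.edges, Finset.Subset.refl _, rfl, disconnected_delete_all h2⟩

lemma exists_cut {G : MG α β} (h2 : 2 ≤ G.verts.card) :
    ∃ X ⊆ G.edges, X.card = G.kappa ∧ ¬ (G.deleteEdges X).Connected :=
  Nat.sInf_mem (kset_nonempty h2)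

lemma le_kappa {G : MG α β} {m : ℕ} (h2 : 2 ≤ G.verts.card)
    (h : ∀ X ⊆ G.edges, ¬ (G.deleteEdges X).Connected → m ≤ X.card) :
    m ≤ G.kappa := by
  refine le_csInf (kset_nonempty h2) ?_
  rintro n ⟨X, hX, rfl, hd⟩
  exact h X hX hd

lemma kappa_le_card (G : MG α β) : G.kappa ≤ G.edges.card := by
  rcases Set.eq_empty_or_nonempty
      {n | ∃ X ⊆ G.edges, X.card = n ∧ ¬ (G.deleteEdges X).Connected} with h | h
  · simp [kappa, h]
  · obtain ⟨X, hX, hc, _⟩ := Nat.sInf_mem h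
    rw [kappa, ← hc]
    exact Finset.card_le_card hX

lemma kbar_bdd (G : MG α β) :
    BddAbove {n | ∃ H : MG α β, IsSubgraph H G ∧ kappa H = n} := by
  refine ⟨G.edges.card, ?_⟩
  rintro n ⟨H, hs, rfl⟩
  exact (kappa_le_card H).trans (Finset.card_le_card hs.2.1)

lemma kbar_nonempty (G : MG α β) :
    {n | ∃ H : MG α β, IsSubgraph H G ∧ kappa H = n}.Nonempty :=
  ⟨G.kappa, G, subgraph_refl G, rfl⟩

lemma le_kappabar {G H : MG α β} (hs : IsSubgraph H G) : kappa H ≤ kappabar G :=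
  le_csSup (kbar_bdd G) ⟨H, hs, rfl⟩

lemma kappabar_le {G : MG α β} {m : ℕ} (h : ∀ H : MG α β, IsSubgraph H G → kappa H ≤ m) :
    kappabar G ≤ m := by
  refine csSup_le (kbar_nonempty G) ?_
  rintro n ⟨H, hs, rfl⟩
  exact h H hs

lemma exists_kappabar_witness (G : MG α β) :
    ∃ H : MG α β, IsSubgraph H G ∧ kappa H = kappabar G :=
  Nat.sSup_mem (kbar_nonempty G) (kbar_bdd G)

lemma kappabar_mono {G₁ G : MG α β} (h : IsSubgraph G₁ G) : kappabar G₁ ≤ kappabar G :=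
  kappabar_le fun H hs => le_kappabar (subgraph_trans hs h)

lemma hasTrees_zero (G : MG α β) : HasTrees G 0 :=
  ⟨Fin.elim0, fun i => i.elim0, fun i => i.elim0⟩

/-- Any disconnecting edge set meets each of `m` edge-disjoint spanning trees in
distinct edges, so it has at least `m` edges. -/
lemma trees_le_cut {G : MG α β} {m : ℕ} (hm : HasTrees G m) {X : Finset β}
    (hX : X ⊆ G.edges) (hd : ¬ (G.deleteEdges X).Connected) : m ≤ X.card := by
  rcases Nat.eq_zero_or_pos m with rfl | hmpos
  · exact Nat.zero_le _
  obtain ⟨T, hT, hdisj⟩ := hm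
  have hvne : G.verts.Nonempty := by
    have := (hT ⟨0, hmpos⟩).2.2.1.1
    rw [(hT ⟨0, hmpos⟩).2.1] at this; exact this
  obtain ⟨u, hu, w, hw, huw⟩ := exists_unreachable hd hvne
  set A : Set α := {v | (G.deleteEdges X).Reach u v} with hA
  have hcr : ∀ i : Fin m, ∃ g ∈ (T i).edges, Cross A ((T i).ends g) := by
    intro i
    have hconn := (hT i).2.2.1
    have hreach : (T i).Reach u w :=
      hconn.2 u (by rw [(hT i).2.1]; exact hu) w (by rw [(hT i).2.1]; exact hw)
    exact exists_cross hreach Relation.ReflTransGen.refl huw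
  choose g hg hgc using hcr
  have hgX : ∀ i, g i ∈ X := by
    intro i
    by_contra hgX
    obtain ⟨p, q, hpq, hp, hq⟩ := hgc i
    have hge : g i ∈ G.edges := (hT i).1.2.1 (hg i)
    have : (G.deleteEdges X).Adj p q :=
      ⟨g i, Finset.mem_sdiff.mpr ⟨hge, hgX⟩, by
        rw [show (G.deleteEdges X).ends = G.ends from rfl, ← (hT i).1.2.2 _ (hg i), hpq]⟩
    exact hq (hp.tail this)
  have hinj : Function.Injective g := by
    intro i j hij
    by_contra hne
    have := hdisj i j hne
    exact (Finset.disjoint_left.mp this (hg i)) (hij ▸ hg j)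
  have h1 : (Finset.univ : Finset (Fin m)).card ≤ X.card :=
    Finset.card_le_card_of_injOn (s := Finset.univ) g (fun i _ => hgX i) hinj.injOn
  simpa using h1

lemma tau_bdd {G : MG α β} (h2 : 2 ≤ G.verts.card) :
    ∀ m ∈ {m | G.HasTrees m}, m ≤ G.edges.card := fun m hm =>
  trees_le_cut hm (Finset.Subset.refl _) (disconnected_delete_all h2)

lemma hasTrees_tau {G : MG α β} (h2 : 2 ≤ G.verts.card) : G.HasTrees (tau G) := by
  have h := Nat.sSup_mem (s := {m | G.HasTrees m}) ⟨0, hasTrees_zero G⟩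
    ⟨G.edges.card, tau_bdd h2⟩
  exact h

lemma tau_eq {G : MG α β} {k : ℕ} (hk : G.HasTrees k)
    (hub : ∀ m, G.HasTrees m → m ≤ k) : tau G = k := by
  have h1 : sSup {m | G.HasTrees m} ≤ k :=
    csSup_le ⟨0, hasTrees_zero G⟩ hub
  have h2 : k ≤ sSup {m | G.HasTrees m} :=
    le_csSup ⟨k, fun m hm => hub m hm⟩ hk
  exact le_antisymm h1 h2

end MG
namespace MG
variable {α β : Type} [DecidableEq α] [DecidableEq β]

/-- Induced subgraph on a vertex set `S`. -/
noncomputable def restrict (G : MG α β) (S : Finset α) : MG α β :=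
  ⟨S, G.edges.filter (fun g => ∀ v ∈ G.ends g, v ∈ S), G.ends,
   fun e he v hv => (Finset.mem_filter.mp he).2 v hv⟩

lemma restrict_verts (G : MG α β) (S : Finset α) : (G.restrict S).verts = S := rfl
lemma restrict_ends (G : MG α β) (S : Finset α) : (G.restrict S).ends = G.ends := rfl

lemma mem_restrict_edges {G : MG α β} {S : Finset α} {g : β} :
    g ∈ (G.restrict S).edges ↔ g ∈ G.edges ∧ ∀ v ∈ G.ends g, v ∈ S :=
  Finset.mem_filter

lemma restrict_subgraph (G : MG α β) {S : Finset α} (hS : S ⊆ G.verts) :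
    IsSubgraph (G.restrict S) G :=
  ⟨hS, Finset.filter_subset _ _, fun _ _ => rfl⟩

/-- Crossing w.r.t. the complement side. -/
lemma cross_compl {V S : Finset α} {z : Sym2 α} (hz : ∀ v ∈ z, v ∈ V) :
    Cross (↑(V \ S)) z ↔ Cross (↑S) z := by
  constructor
  · rintro ⟨p, q, rfl, hp, hq⟩
    have hqV : q ∈ V := hz q (by rw [Sym2.mem_iff]; right; rfl)
    have hpS : p ∉ S := by
      have := Finset.mem_sdiff.mp (by exact_mod_cast hp)
      exact this.2
    have hqS : q ∈ S := by
      by_contra hqS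
      exact hq (by exact_mod_cast Finset.mem_sdiff.mpr ⟨hqV, hqS⟩)
    exact ⟨q, p, Sym2.eq_swap, by exact_mod_cast hqS, by exact_mod_cast hpS⟩
  · rintro ⟨p, q, rfl, hp, hq⟩
    have hpV : p ∈ V := hz p (by rw [Sym2.mem_iff]; left; rfl)
    refine ⟨q, p, Sym2.eq_swap, ?_, ?_⟩
    · have hqV : q ∈ V := hz q (by rw [Sym2.mem_iff]; right; rfl)
      exact_mod_cast Finset.mem_sdiff.mpr ⟨hqV, by exact_mod_cast hq⟩
    · intro hmem
      exact (Finset.mem_sdiff.mp (by exact_mod_cast hmem)).2 (by exact_mod_cast hp)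

/-- An edge of `G` crossing the reachability class (in `G − X`) of `u` must be in `X`. -/
lemma cross_mem_del {G : MG α β} {X : Finset β} {u : α} {g : β} (hg : g ∈ G.edges)
    (hc : Cross {v | (G.deleteEdges X).Reach u v} (G.ends g)) : g ∈ X := by
  obtain ⟨p, q, hpq, hp, hq⟩ := hc
  by_contra hgX
  have : (G.deleteEdges X).Adj p q := ⟨g, Finset.mem_sdiff.mpr ⟨hg, hgX⟩, hpq⟩
  exact hq (Relation.ReflTransGen.tail hp this)

/-- If `S` touches a connected `G` along exactly one crossing edge `x = s(p,q)` with
`p ∈ S`, `q ∉ S`, then the restriction of `G` to `S` is connected. -/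
lemma side_connected {G : MG α β} (hG : G.Connected) {S : Finset α} (hS : S ⊆ G.verts)
    {x : β} (hx : x ∈ G.edges) {p q : α} (hpq : G.ends x = s(p, q))
    (hp : p ∈ S) (hq : q ∉ S)
    (huniq : ∀ g ∈ G.edges, Cross (↑S) (G.ends g) → g = x) :
    (G.restrict S).Connected := by
  have hnocross : ∀ g ∈ (G.deleteEdges {x}).edges, ¬ Cross (↑S) ((G.deleteEdges {x}).ends g) := by
    intro g hg hc
    have hg' : g ∈ G.edges \ ({x} : Finset β) := hg
    rw [Finset.mem_sdiff] at hg'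
    exact hg'.2 (Finset.mem_singleton.mpr (huniq g hg'.1 hc))
  -- bridge claim
  have claim0 : ∀ v, G.Reach p v →
      (G.deleteEdges {x}).Reach p v ∨ (G.deleteEdges {x}).Reach q v := by
    intro v hv
    induction hv with
    | refl => exact Or.inl Relation.ReflTransGen.refl
    | @tail c d _ hadj ih =>
        obtain ⟨g, hg, hge⟩ := hadj
        by_cases hgx : g = x
        · subst hgx
          rw [hpq] at hge
          rcases Sym2.eq_iff.mp hge with ⟨rfl, rfl⟩ | ⟨rfl, rfl⟩
          · exact Or.inr Relation.ReflTransGen.refl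
          · exact Or.inl Relation.ReflTransGen.refl
        · have hadj' : (G.deleteEdges {x}).Adj c d :=
            ⟨g, Finset.mem_sdiff.mpr ⟨hg, by simp [hgx]⟩, hge⟩
          rcases ih with h | h
          · exact Or.inl (h.tail hadj')
          · exact Or.inr (h.tail hadj')
  have claim1 : ∀ v, (G.deleteEdges {x}).Reach p v →
      v ∈ S ∧ (G.restrict S).Reach p v := by
    intro v hv
    induction hv with
    | refl => exact ⟨hp, Relation.ReflTransGen.refl⟩
    | @tail c d _ hadj ih =>
        obtain ⟨g, hg, hge⟩ := hadj
        have hg : g ∈ G.edges \ ({x} : Finset β) := hg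
        rw [Finset.mem_sdiff] at hg
        have hcS : c ∈ S := ih.1
        have hdS : d ∈ S := by
          by_contra hdS
          have : Cross (↑S) (G.ends g) := ⟨c, d, hge, by exact_mod_cast hcS, by exact_mod_cast hdS⟩
          exact hg.2 (Finset.mem_singleton.mpr (huniq g hg.1 this))
        have hge' : G.ends g = s(c, d) := hge
        have hgr : g ∈ (G.restrict S).edges := by
          rw [mem_restrict_edges]
          refine ⟨hg.1, ?_⟩
          intro v hvmem
          rw [hge', Sym2.mem_iff] at hvmem
          rcases hvmem with rfl | rfl
          · exact hcS
          · exact hdS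
        exact ⟨hdS, ih.2.tail ⟨g, hgr, hge⟩⟩
  have claim2 : ∀ v ∈ S, (G.restrict S).Reach p v := by
    intro v hvS
    have hvG : v ∈ G.verts := hS hvS
    have hr : G.Reach p v := hG.2 p (hS hp) v hvG
    rcases claim0 v hr with h | h
    · exact (claim1 v h).2
    · exfalso
      have hnot : ∀ g ∈ (G.deleteEdges {x}).edges,
          ¬ Cross ((↑S : Set α)ᶜ) ((G.deleteEdges {x}).ends g) := by
        intro g hg hc
        obtain ⟨a, b, hab, ha, hb⟩ := hc
        refine hnocross g hg ⟨b, a, hab.trans Sym2.eq_swap, ?_, ha⟩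
        simpa using hb
      have : (v : α) ∈ ((↑S : Set α)ᶜ) := reach_stays hnot h (by simpa using hq)
      exact this (by exact_mod_cast hvS)
  refine ⟨⟨p, hp⟩, ?_⟩
  intro a ha b hb
  exact Relation.ReflTransGen.trans (reach_symm (claim2 a ha)) (claim2 b hb)

/-- A connected multigraph has at least `|V| − 1` edges. -/
lemma conn_card : ∀ (m : ℕ) (G : MG α β), G.edges.card = m → G.Connected →
    G.verts.card ≤ G.edges.card + 1 := by
  intro m
  induction m using Nat.strong_induction_on with
  | _ m IH =>
    intro G hm hG
    by_cases hv : G.verts.card ≤ 1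
    · omega
    push_neg at hv
    obtain ⟨u, hu, w, hw, huw⟩ := Finset.one_lt_card.mp hv
    -- G has an edge
    have hconn := hG.2 u hu w hw
    by_cases hE : G.edges = ∅
    · exfalso
      have : ∀ x y, G.Reach x y → x = y := by
        intro x y h
        induction h with
        | refl => rfl
        | tail _ hadj ih => obtain ⟨g, hg, _⟩ := hadj; rw [hE] at hg; simp at hg
      exact huw (this u w hconn)
    obtain ⟨g0, hg0⟩ := Finset.nonempty_iff_ne_empty.mpr hE
    by_cases hdel : (G.deleteEdges {g0}).Connected
    · have hcard : (G.deleteEdges {g0}).edges.card = m - 1 := by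
        show (G.edges \ {g0}).card = m - 1
        rw [Finset.sdiff_singleton_eq_erase, Finset.card_erase_of_mem hg0, hm]
      have hmpos : 1 ≤ m := hm ▸ Finset.card_pos.mpr ⟨g0, hg0⟩
      have hrec := IH (m - 1) (by omega) (G.deleteEdges {g0}) hcard hdel
      have hveq : (G.deleteEdges {g0}).verts = G.verts := rfl
      rw [hveq, hcard] at hrec
      rw [hm]
      omega
    · obtain ⟨u', hu', w', hw', huw'⟩ := exists_unreachable hdel ⟨u, hu⟩
      set S : Finset α := G.verts.filter (fun v => (G.deleteEdges {g0}).Reach u' v) with hSdef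
      have hSsub : S ⊆ G.verts := Finset.filter_subset _ _
      have hu'S : u' ∈ S := Finset.mem_filter.mpr ⟨hu', Relation.ReflTransGen.refl⟩
      have hw'S : w' ∉ S := fun h => huw' (Finset.mem_filter.mp h).2
      -- crossing edges are u'−class crossing, hence = g0
      have hcrequiv : ∀ z : Sym2 α, (∀ v ∈ z, v ∈ G.verts) →
          (Cross (↑S) z ↔ Cross {v | (G.deleteEdges {g0}).Reach u' v} z) := by
        intro z hz
        constructor
        · rintro ⟨a, b, rfl, ha, hb⟩
          have ha' : a ∈ S := by exact_mod_cast ha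
          refine ⟨a, b, rfl, (Finset.mem_filter.mp ha').2, ?_⟩
          intro hrb
          have hbV : b ∈ G.verts := hz b (by rw [Sym2.mem_iff]; right; rfl)
          have : b ∈ S := Finset.mem_filter.mpr ⟨hbV, hrb⟩
          exact hb (by exact_mod_cast this)
        · rintro ⟨a, b, rfl, ha, hb⟩
          have haV : a ∈ G.verts := hz a (by rw [Sym2.mem_iff]; left; rfl)
          have ha' : a ∈ S := Finset.mem_filter.mpr ⟨haV, ha⟩
          refine ⟨a, b, rfl, by exact_mod_cast ha', ?_⟩
          intro hmem
          have hb' : b ∈ S := by exact_mod_cast hmem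
          exact hb (Finset.mem_filter.mp hb').2
      have huniq : ∀ g ∈ G.edges, Cross (↑S) (G.ends g) → g = g0 := by
        intro g hg hc
        have := cross_mem_del (X := {g0}) hg
          (((hcrequiv (G.ends g)) (fun v hv => G.wf g hg v hv)).mp hc)
        exact Finset.mem_singleton.mp this
      -- there is a crossing edge, namely g0 itself crosses
      have hcross0 : ∃ g ∈ G.edges, Cross (↑S) (G.ends g) := by
        have hr : G.Reach u' w' := hG.2 u' hu' w' hw'
        exact exists_cross hr (by exact_mod_cast hu'S) (by exact_mod_cast hw'S)
      obtain ⟨g1, hg1, hg1c⟩ := hcross0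
      have hg1eq : g1 = g0 := huniq g1 hg1 hg1c
      subst hg1eq
      obtain ⟨p, q, hpq, hpS, hqS⟩ := hg1c
      have hpS' : p ∈ S := by exact_mod_cast hpS
      have hqS' : q ∉ S := fun h => hqS (by exact_mod_cast h)
      -- complement side
      set S' : Finset α := G.verts \ S with hS'def
      have hqS'' : q ∈ S' := Finset.mem_sdiff.mpr
        ⟨G.wf g1 hg1 q (by rw [hpq, Sym2.mem_iff]; right; rfl), hqS'⟩
      have hpS'' : p ∉ S' := fun h => (Finset.mem_sdiff.mp h).2 hpS'
      have huniq' : ∀ g ∈ G.edges, Cross (↑S') (G.ends g) → g = g1 := by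
        intro g hg hc
        exact huniq g hg ((cross_compl (fun v hv => G.wf g hg v hv)).mp hc)
      have hconn1 : (G.restrict S).Connected :=
        side_connected hG hSsub hg1 hpq hpS' hqS' huniq
      have hconn2 : (G.restrict S').Connected :=
        side_connected hG (Finset.sdiff_subset) hg1
          (hpq.trans Sym2.eq_swap) hqS'' hpS'' huniq'
      -- edge sets of the two sides are disjoint and don't contain g1
      have hdisj : Disjoint (G.restrict S).edges (G.restrict S').edges := by
        rw [Finset.disjoint_left]
        intro g hgS hgS'
        obtain ⟨hgE, hcond⟩ := mem_restrict_edges.mp hgS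
        obtain ⟨_, hcond'⟩ := mem_restrict_edges.mp hgS'
        obtain ⟨a, b, hab⟩ := sym2_cases (G.ends g)
        have haS : a ∈ S := hcond a (by rw [hab, Sym2.mem_iff]; left; rfl)
        have haS' : a ∈ S' := hcond' a (by rw [hab, Sym2.mem_iff]; left; rfl)
        exact (Finset.mem_sdiff.mp haS').2 haS
      have hg1S : g1 ∉ (G.restrict S).edges := by
        intro h
        exact hqS' ((mem_restrict_edges.mp h).2 q (by rw [hpq, Sym2.mem_iff]; right; rfl))
      have hg1S' : g1 ∉ (G.restrict S').edges := by
        intro h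
        exact hpS'' ((mem_restrict_edges.mp h).2 p (by rw [hpq, Sym2.mem_iff]; left; rfl))
      have hsubE : (G.restrict S).edges ∪ (G.restrict S').edges ∪ {g1} ⊆ G.edges := by
        intro g hg
        rcases Finset.mem_union.mp hg with hg' | hg'
        · rcases Finset.mem_union.mp hg' with h | h
          · exact (mem_restrict_edges.mp h).1
          · exact (mem_restrict_edges.mp h).1
        · rw [Finset.mem_singleton.mp hg']; exact hg1
      have hcardsum : (G.restrict S).edges.card + (G.restrict S').edges.card + 1 ≤ G.edges.card := by
        have h1 : ((G.restrict S).edges ∪ (G.restrict S').edges ∪ {g1}).card =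
            (G.restrict S).edges.card + (G.restrict S').edges.card + 1 := by
          rw [Finset.card_union_of_disjoint, Finset.card_union_of_disjoint hdisj,
            Finset.card_singleton]
          rw [Finset.disjoint_singleton_right, Finset.mem_union]
          rintro (h | h)
          · exact hg1S h
          · exact hg1S' h
        rw [← h1]
        exact Finset.card_le_card hsubE
      -- vertex counts
      have hvsum : G.verts.card = S.card + S'.card := by
        rw [hS'def]
        rw [Finset.card_sdiff_of_subset hSsub]
        have := Finset.card_le_card hSsub
        omega
      -- recursion
      have hlt1 : (G.restrict S).edges.card < m := by
        have : (G.restrict S).edges.card + 1 ≤ G.edges.card := by omega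
        omega
      have hlt2 : (G.restrict S').edges.card < m := by omega
      have hc1 := IH _ hlt1 (G.restrict S) rfl hconn1
      have hc2 := IH _ hlt2 (G.restrict S') rfl hconn2
      rw [restrict_verts] at hc1 hc2
      omega

end MG
namespace MG
variable {α β : Type} [DecidableEq α] [DecidableEq β]

/-- Splitting a tree along its unique crossing edge. -/
lemma tree_split {T : MG α β} (hconn : T.Connected)
    (hcard : T.edges.card + 1 = T.verts.card)
    {S : Finset α} (hS : S ⊆ T.verts) {x : β} (hx : x ∈ T.edges)
    {p q : α} (hpq : T.ends x = s(p, q)) (hp : p ∈ S) (hq : q ∉ S)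
    (huniq : ∀ g ∈ T.edges, Cross (↑S) (T.ends g) → g = x) :
    (T.restrict S).Connected ∧ (T.restrict S).edges.card + 1 = S.card := by
  set S' : Finset α := T.verts \ S with hS'def
  have hqv : q ∈ T.verts := T.wf x hx q (by rw [hpq, Sym2.mem_iff]; right; rfl)
  have hq' : q ∈ S' := Finset.mem_sdiff.mpr ⟨hqv, hq⟩
  have hp' : p ∉ S' := fun h => (Finset.mem_sdiff.mp h).2 hp
  have huniq' : ∀ g ∈ T.edges, Cross (↑S') (T.ends g) → g = x := by
    intro g hg hc
    exact huniq g hg ((cross_compl (fun v hv => T.wf g hg v hv)).mp hc)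
  have hconn1 : (T.restrict S).Connected := side_connected hconn hS hx hpq hp hq huniq
  have hconn2 : (T.restrict S').Connected :=
    side_connected hconn Finset.sdiff_subset hx (hpq.trans Sym2.eq_swap) hq' hp' huniq'
  -- partition of the edge set
  have hdisj : Disjoint (T.restrict S).edges (T.restrict S').edges := by
    rw [Finset.disjoint_left]
    intro g hgS hgS'
    obtain ⟨hgE, hcond⟩ := mem_restrict_edges.mp hgS
    obtain ⟨_, hcond'⟩ := mem_restrict_edges.mp hgS'
    obtain ⟨a, b, hab⟩ := sym2_cases (T.ends g)
    have haS : a ∈ S := hcond a (by rw [hab, Sym2.mem_iff]; left; rfl)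
    have haS' : a ∈ S' := hcond' a (by rw [hab, Sym2.mem_iff]; left; rfl)
    exact (Finset.mem_sdiff.mp haS').2 haS
  have hxS : x ∉ (T.restrict S).edges := by
    intro h
    exact hq ((mem_restrict_edges.mp h).2 q (by rw [hpq, Sym2.mem_iff]; right; rfl))
  have hxS' : x ∉ (T.restrict S').edges := by
    intro h
    exact hp' ((mem_restrict_edges.mp h).2 p (by rw [hpq, Sym2.mem_iff]; left; rfl))
  have hunion : T.edges = (T.restrict S).edges ∪ (T.restrict S').edges ∪ {x} := by
    apply Finset.Subset.antisymm
    · intro g hg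
      obtain ⟨a, b, hab⟩ := sym2_cases (T.ends g)
      have haV : a ∈ T.verts := T.wf g hg a (by rw [hab, Sym2.mem_iff]; left; rfl)
      have hbV : b ∈ T.verts := T.wf g hg b (by rw [hab, Sym2.mem_iff]; right; rfl)
      by_cases haS : a ∈ S <;> by_cases hbS : b ∈ S
      · refine Finset.mem_union.mpr (Or.inl (Finset.mem_union.mpr (Or.inl ?_)))
        refine mem_restrict_edges.mpr ⟨hg, ?_⟩
        intro v hv
        rw [hab, Sym2.mem_iff] at hv
        rcases hv with rfl | rfl
        · exact haS
        · exact hbS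
      · have : g = x := huniq g hg ⟨a, b, hab, by exact_mod_cast haS, fun h => hbS (by exact_mod_cast h)⟩
        subst this
        exact Finset.mem_union.mpr (Or.inr (Finset.mem_singleton.mpr rfl))
      · have : g = x := huniq g hg ⟨b, a, hab.trans Sym2.eq_swap,
          by exact_mod_cast hbS, fun h => haS (by exact_mod_cast h)⟩
        subst this
        exact Finset.mem_union.mpr (Or.inr (Finset.mem_singleton.mpr rfl))
      · refine Finset.mem_union.mpr (Or.inl (Finset.mem_union.mpr (Or.inr ?_)))
        refine mem_restrict_edges.mpr ⟨hg, ?_⟩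
        intro v hv
        rw [hab, Sym2.mem_iff] at hv
        rcases hv with rfl | rfl
        · exact Finset.mem_sdiff.mpr ⟨haV, haS⟩
        · exact Finset.mem_sdiff.mpr ⟨hbV, hbS⟩
    · intro g hg
      rcases Finset.mem_union.mp hg with hg' | hg'
      · rcases Finset.mem_union.mp hg' with h | h
        · exact (mem_restrict_edges.mp h).1
        · exact (mem_restrict_edges.mp h).1
      · rw [Finset.mem_singleton.mp hg']; exact hx
  have hcardE : T.edges.card = (T.restrict S).edges.card + (T.restrict S').edges.card + 1 := by
    rw [hunion, Finset.card_union_of_disjoint, Finset.card_union_of_disjoint hdisj,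
      Finset.card_singleton]
    rw [Finset.disjoint_singleton_right, Finset.mem_union]
    rintro (h | h)
    · exact hxS h
    · exact hxS' h
  have hvsum : T.verts.card = S.card + S'.card := by
    rw [hS'def, Finset.card_sdiff_of_subset hS]
    have := Finset.card_le_card hS
    omega
  have hcS := conn_card _ (T.restrict S) rfl hconn1
  have hcS' := conn_card _ (T.restrict S') rfl hconn2
  rw [restrict_verts] at hcS hcS'
  exact ⟨hconn1, by omega⟩

/-- Restricting a spanning tree to one side of its unique crossing edge. -/
lemma spanning_tree_restrict {G T : MG α β} (hT : IsSpanningTree G T) {S : Finset α}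
    (hS : S ⊆ G.verts) {x : β} (hx : x ∈ T.edges) {p q : α}
    (hpq : T.ends x = s(p, q)) (hp : p ∈ S) (hq : q ∉ S)
    (huniq : ∀ g ∈ T.edges, Cross (↑S) (T.ends g) → g = x) :
    IsSpanningTree (G.restrict S) (T.restrict S) := by
  obtain ⟨hsub, hverts, hconn, hcard⟩ := hT
  have hvpos : 1 ≤ T.verts.card := Finset.card_pos.mpr ⟨p, by rw [hverts]; exact hS hp⟩
  have hcard' : T.edges.card + 1 = T.verts.card := by omega
  have hS' : S ⊆ T.verts := by rw [hverts]; exact hS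
  obtain ⟨hc1, hc2⟩ := tree_split hconn hcard' hS' hx hpq hp hq huniq
  refine ⟨?_, rfl, hc1, ?_⟩
  · refine ⟨Finset.Subset.refl _, ?_, fun e he => ?_⟩
    · intro g hg
      obtain ⟨hgT, hcond⟩ := mem_restrict_edges.mp hg
      refine mem_restrict_edges.mpr ⟨hsub.2.1 hgT, ?_⟩
      intro v hv
      exact hcond v (by rw [hsub.2.2 g hgT]; exact hv)
    · show T.ends e = G.ends e
      exact hsub.2.2 e (mem_restrict_edges.mp he).1
  · show (T.restrict S).edges.card = S.card - 1
    omega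

end MG
namespace MG
variable {α β : Type} [DecidableEq α] [DecidableEq β]

lemma addEdge_verts (G : MG α β) (e : β) (a b : α) (ha : a ∈ G.verts) (hb : b ∈ G.verts) :
    (G.addEdge e a b ha hb).verts = G.verts := rfl

lemma addEdge_edges (G : MG α β) (e : β) (a b : α) (ha : a ∈ G.verts) (hb : b ∈ G.verts) :
    (G.addEdge e a b ha hb).edges = insert e G.edges := rfl

lemma addEdge_ends_self (G : MG α β) (e : β) (a b : α) (ha : a ∈ G.verts) (hb : b ∈ G.verts) :
    (G.addEdge e a b ha hb).ends e = s(a, b) := Function.update_self e _ _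

lemma addEdge_ends_other (G : MG α β) (e : β) (a b : α) (ha : a ∈ G.verts)
    (hb : b ∈ G.verts) {g : β} (hg : g ≠ e) :
    (G.addEdge e a b ha hb).ends g = G.ends g := Function.update_of_ne hg _ _

lemma subgraph_addEdge_of_not_mem {G H : MG α β} {e : β} {a b : α} {ha : a ∈ G.verts}
    {hb : b ∈ G.verts} (hs : IsSubgraph H (G.addEdge e a b ha hb)) (he : e ∉ H.edges) :
    IsSubgraph H G := by
  refine ⟨hs.1, ?_, ?_⟩
  · intro g hg
    rcases Finset.mem_insert.mp (hs.2.1 hg) with rfl | h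
    · exact absurd hg he
    · exact h
  · intro g hg
    have hge : g ≠ e := fun h => he (h ▸ hg)
    rw [hs.2.2 g hg]
    exact addEdge_ends_other G e a b ha hb hge

lemma addEdge_restrict_subgraph {G : MG α β} {S : Finset α} (hS : S ⊆ G.verts)
    {e : β} {a b : α} (ha' : a ∈ (G.restrict S).verts) (hb' : b ∈ (G.restrict S).verts)
    (ha : a ∈ G.verts) (hb : b ∈ G.verts) :
    IsSubgraph ((G.restrict S).addEdge e a b ha' hb') (G.addEdge e a b ha hb) := by
  refine ⟨hS, ?_, ?_⟩
  · intro g hg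
    rcases Finset.mem_insert.mp hg with rfl | h
    · exact Finset.mem_insert_self _ _
    · exact Finset.mem_insert_of_mem (mem_restrict_edges.mp h).1
  · intro g _
    show Function.update (G.restrict S).ends e s(a, b) g = Function.update G.ends e s(a, b) g
    rfl

lemma cross_filter_equiv {G0 : MG α β} {Y : Finset β} {u : α} {z : Sym2 α}
    (hz : ∀ v ∈ z, v ∈ G0.verts) :
    Cross (↑(G0.verts.filter (fun v => (G0.deleteEdges Y).Reach u v))) z ↔
      Cross {v | (G0.deleteEdges Y).Reach u v} z := by
  constructor
  · rintro ⟨p, q, rfl, hp, hq⟩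
    have hp' : p ∈ G0.verts.filter (fun v => (G0.deleteEdges Y).Reach u v) := by exact_mod_cast hp
    refine ⟨p, q, rfl, (Finset.mem_filter.mp hp').2, ?_⟩
    intro hr
    have : q ∈ G0.verts.filter (fun v => (G0.deleteEdges Y).Reach u v) :=
      Finset.mem_filter.mpr ⟨hz q (by rw [Sym2.mem_iff]; right; rfl), hr⟩
    exact hq (by exact_mod_cast this)
  · rintro ⟨p, q, rfl, hp, hq⟩
    have hp' : p ∈ G0.verts.filter (fun v => (G0.deleteEdges Y).Reach u v) :=
      Finset.mem_filter.mpr ⟨hz p (by rw [Sym2.mem_iff]; left; rfl), hp⟩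
    refine ⟨p, q, rfl, by exact_mod_cast hp', ?_⟩
    intro hmem
    have : q ∈ G0.verts.filter (fun v => (G0.deleteEdges Y).Reach u v) := by exact_mod_cast hmem
    exact hq (Finset.mem_filter.mp this).2

/-- From `k` disjoint spanning trees each crossing `S` exactly once, obtain `k`
disjoint spanning trees of the induced subgraph on `S`. -/
lemma descend {G : MG α β} {k : ℕ} {T : Fin k → MG α β}
    (hTs : ∀ i, IsSpanningTree G (T i))
    (hTd : ∀ i j, i ≠ j → Disjoint (T i).edges (T j).edges)
    {S : Finset α} (hS : S ⊆ G.verts) {g : Fin k → β}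
    (hg : ∀ i, g i ∈ (T i).edges)
    (hcr : ∀ i, Cross (↑S) ((T i).ends (g i)))
    (huniq : ∀ i, ∀ g' ∈ (T i).edges, Cross (↑S) ((T i).ends g') → g' = g i) :
    HasTrees (G.restrict S) k := by
  refine ⟨fun i => (T i).restrict S, fun i => ?_, fun i j hij => ?_⟩
  · obtain ⟨p, q, hpq, hp, hq⟩ := hcr i
    exact spanning_tree_restrict (hTs i) hS (hg i) hpq (by exact_mod_cast hp)
      (fun h => hq (by exact_mod_cast h)) (huniq i)
  · have h := hTd i j hij
    rw [Finset.disjoint_left] at h ⊢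
    intro x hx hx'
    exact h (mem_restrict_edges.mp hx).1 (mem_restrict_edges.mp hx').1

/-- Main lemma for the reverse implication: a graph with `k` edge-disjoint spanning
trees plus one extra edge contains a `(k+1)`-edge-connected subgraph. -/
lemma lemA : ∀ (n : ℕ) (G : MG α β), G.verts.card ≤ n → ∀ {k : ℕ},
    G.HasTrees k → ∀ (e : β), e ∉ G.edges → ∀ (a b : α)
    (ha : a ∈ G.verts) (hb : b ∈ G.verts), a ≠ b →
    ∃ H : MG α β, IsSubgraph H (G.addEdge e a b ha hb) ∧ k + 1 ≤ kappa H := by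
  intro n
  induction n with
  | zero =>
      intro G hn k _ e _ a _ ha _ _
      have := Finset.card_pos.mpr ⟨a, ha⟩
      omega
  | succ n IH =>
    intro G hn k hT e he a b ha hb hab
    by_cases hk1 : k + 1 ≤ kappa (G.addEdge e a b ha hb)
    · exact ⟨G.addEdge e a b ha hb, subgraph_refl _, hk1⟩
    set G' := G.addEdge e a b ha hb with hG'def
    push_neg at hk1
    have h2 : 2 ≤ G'.verts.card := Finset.one_lt_card.mpr ⟨a, ha, b, hb, hab⟩
    obtain ⟨Y, hYsub, hYcard, hYdisc⟩ := exists_cut h2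
    have hYk : Y.card ≤ k := by omega
    obtain ⟨u, hu, w, hw, huw⟩ := exists_unreachable hYdisc ⟨a, ha⟩
    set A : Finset α := G'.verts.filter (fun v => (G'.deleteEdges Y).Reach u v) with hAdef
    have hAsub : A ⊆ G.verts := Finset.filter_subset _ _
    have huA : u ∈ A := Finset.mem_filter.mpr ⟨hu, Relation.ReflTransGen.refl⟩
    have hwA : w ∉ A := fun h => huw (Finset.mem_filter.mp h).2
    set X' : Finset β := G'.edges.filter (fun g => Cross (↑A) (G'.ends g)) with hX'def
    have hX'Y : X' ⊆ Y := by
      intro g hgX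
      obtain ⟨hgE, hgc⟩ := Finset.mem_filter.mp hgX
      exact cross_mem_del hgE ((cross_filter_equiv (fun v hv => G'.wf g hgE v hv)).mp hgc)
    obtain ⟨T, hTs, hTd⟩ := hT
    -- each tree has a crossing edge
    have hcr : ∀ i : Fin k, ∃ g ∈ (T i).edges, Cross (↑A) ((T i).ends g) := by
      intro i
      have hconn := (hTs i).2.2.1
      have hre : (T i).Reach u w :=
        hconn.2 u (by rw [(hTs i).2.1]; exact hu) w (by rw [(hTs i).2.1]; exact hw)
      exact exists_cross hre (by exact_mod_cast huA) (fun h => hwA (by exact_mod_cast h))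
    choose g hg hgc using hcr
    have hends : ∀ i (g' : β), g' ∈ (T i).edges → (T i).ends g' = G'.ends g' := by
      intro i g' hg'
      have hgG : g' ∈ G.edges := (hTs i).1.2.1 hg'
      have hne : g' ≠ e := fun h => he (h ▸ hgG)
      rw [(hTs i).1.2.2 g' hg']
      exact (addEdge_ends_other G e a b ha hb hne).symm
    have hgX' : ∀ i, g i ∈ X' := by
      intro i
      refine Finset.mem_filter.mpr ⟨Finset.mem_insert_of_mem ((hTs i).1.2.1 (hg i)), ?_⟩
      rw [← hends i (g i) (hg i)]
      exact hgc i
    have hinj : Function.Injective g := by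
      intro i j hij
      by_contra hne
      exact (Finset.disjoint_left.mp (hTd i j hne) (hg i)) (hij ▸ hg j)
    have himgsub : Finset.univ.image g ⊆ X' := by
      intro x hx
      obtain ⟨i, _, rfl⟩ := Finset.mem_image.mp hx
      exact hgX' i
    have himgcard : (Finset.univ.image g).card = k := by
      rw [Finset.card_image_of_injective _ hinj, Finset.card_univ, Fintype.card_fin]
    have hX'k : X'.card ≤ k := le_trans (Finset.card_le_card hX'Y) (hYcard ▸ hYk)
    have hX'eq : X' = Finset.univ.image g :=
      (Finset.eq_of_subset_of_card_le himgsub (by omega)).symm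
    have heX' : e ∉ X' := by
      intro hmem
      rw [hX'eq] at hmem
      obtain ⟨i, _, hgi⟩ := Finset.mem_image.mp hmem
      exact he (hgi ▸ (hTs i).1.2.1 (hg i))
    -- a and b lie on the same side of A
    have hecross : ¬ Cross (↑A) (G'.ends e) := by
      intro hc
      exact heX' (Finset.mem_filter.mpr ⟨Finset.mem_insert_self _ _, hc⟩)
    have hendse : G'.ends e = s(a, b) := addEdge_ends_self G e a b ha hb
    have hsame : (a ∈ A ↔ b ∈ A) := by
      constructor
      · intro haA
        by_contra hbA
        exact hecross ⟨a, b, hendse, by exact_mod_cast haA, fun h => hbA (by exact_mod_cast h)⟩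
      · intro hbA
        by_contra haA
        exact hecross ⟨b, a, hendse.trans Sym2.eq_swap,
          by exact_mod_cast hbA, fun h => haA (by exact_mod_cast h)⟩
    -- unique crossing edge per tree
    have huniqA : ∀ i, ∀ g' ∈ (T i).edges, Cross (↑A) ((T i).ends g') → g' = g i := by
      intro i g' hg' hc
      have hgX : g' ∈ X' := by
        refine Finset.mem_filter.mpr ⟨Finset.mem_insert_of_mem ((hTs i).1.2.1 hg'), ?_⟩
        rw [← hends i g' hg']
        exact hc
      rw [hX'eq] at hgX
      obtain ⟨j, _, hj⟩ := Finset.mem_image.mp hgX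
      by_cases hij : j = i
      · rw [← hij, hj]
      · exfalso
        exact (Finset.disjoint_left.mp (hTd j i hij) (hj ▸ hg j)) hg'
    by_cases hcase : a ∈ A
    · -- recurse into A
      have hbA : b ∈ A := hsame.mp hcase
      have htrees : HasTrees (G.restrict A) k :=
        descend hTs hTd hAsub hg hgc huniqA
      have hcardA : (G.restrict A).verts.card ≤ n := by
        have hlt : A.card < G.verts.card :=
          Finset.card_lt_card ⟨hAsub, fun hcon => hwA (hcon hw)⟩
        rw [restrict_verts]
        omega
      have he' : e ∉ (G.restrict A).edges := fun h => he (mem_restrict_edges.mp h).1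
      obtain ⟨H, hHsub, hHk⟩ := IH (G.restrict A) hcardA htrees e he' a b
        (by rw [restrict_verts]; exact hcase) (by rw [restrict_verts]; exact hbA) hab
      exact ⟨H, subgraph_trans hHsub (addEdge_restrict_subgraph hAsub _ _ ha hb), hHk⟩
    · -- recurse into the complement of A
      have hbA : b ∉ A := fun h => hcase (hsame.mpr h)
      set S : Finset α := G.verts \ A with hSdef
      have hSsub : S ⊆ G.verts := Finset.sdiff_subset
      have haS : a ∈ S := Finset.mem_sdiff.mpr ⟨ha, hcase⟩
      have hbS : b ∈ S := Finset.mem_sdiff.mpr ⟨hb, hbA⟩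
      have hzverts : ∀ i (g' : β), g' ∈ (T i).edges → ∀ v ∈ (T i).ends g', v ∈ G.verts := by
        intro i g' hg' v hv
        have := (T i).wf g' hg' v hv
        rw [(hTs i).2.1] at this
        exact this
      have hcrS : ∀ i, Cross (↑S) ((T i).ends (g i)) :=
        fun i => (cross_compl (hzverts i (g i) (hg i))).mpr (hgc i)
      have huniqS : ∀ i, ∀ g' ∈ (T i).edges, Cross (↑S) ((T i).ends g') → g' = g i := by
        intro i g' hg' hc
        exact huniqA i g' hg' ((cross_compl (hzverts i g' hg')).mp hc)
      have htrees : HasTrees (G.restrict S) k :=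
        descend hTs hTd hSsub hg hcrS huniqS
      have hcardS : (G.restrict S).verts.card ≤ n := by
        have hlt : S.card < G.verts.card :=
          Finset.card_lt_card ⟨hSsub, fun hcon =>
            (Finset.mem_sdiff.mp (hcon (hAsub huA))).2 huA⟩
        rw [restrict_verts]
        omega
      have he' : e ∉ (G.restrict S).edges := fun h => he (mem_restrict_edges.mp h).1
      obtain ⟨H, hHsub, hHk⟩ := IH (G.restrict S) hcardS htrees e he' a b
        (by rw [restrict_verts]; exact haS) (by rw [restrict_verts]; exact hbS) hab
      exact ⟨H, subgraph_trans hHsub (addEdge_restrict_subgraph hSsub _ _ ha hb), hHk⟩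

end MG
namespace MG
variable {α β : Type} [DecidableEq α] [DecidableEq β]

/-- The "goodness" add-edge property. -/
def GoodAdd (k : ℕ) (G : MG α β) : Prop :=
  ∀ a (ha : a ∈ G.verts), ∀ b (hb : b ∈ G.verts), a ≠ b →
    ∃ f, f ∉ G.edges ∧ ∃ H : MG α β,
      IsSubgraph H (G.addEdge f a b ha hb) ∧ k + 1 ≤ kappa H

lemma kappa_le_kappabar (G : MG α β) : kappa G ≤ kappabar G :=
  le_kappabar (subgraph_refl G)

/-- Under `κ̄' ≤ k` and the add-edge property, every disconnecting set has ≥ `k` edges. -/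
lemma cuts_ge {G : MG α β} {k : ℕ} (hvne : G.verts.Nonempty)
    (hkbar : kappabar G ≤ k) (hadd : GoodAdd k G) :
    ∀ X ⊆ G.edges, ¬ (G.deleteEdges X).Connected → k ≤ X.card := by
  intro X hX hd
  by_contra hlt
  push_neg at hlt
  obtain ⟨u, hu, w, hw, huw⟩ := exists_unreachable hd hvne
  set A : Finset α := G.verts.filter (fun v => (G.deleteEdges X).Reach u v) with hAdef
  have huA : u ∈ A := Finset.mem_filter.mpr ⟨hu, Relation.ReflTransGen.refl⟩
  have hwA : w ∉ A := fun h => huw (Finset.mem_filter.mp h).2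
  set X' : Finset β := G.edges.filter (fun g => Cross (↑A) (G.ends g)) with hX'def
  have hX'X : X' ⊆ X := by
    intro g hgX
    obtain ⟨hgE, hgc⟩ := Finset.mem_filter.mp hgX
    exact cross_mem_del hgE ((cross_filter_equiv (fun v hv => G.wf g hgE v hv)).mp hgc)
  have huwne : u ≠ w := fun h => huw (h ▸ Relation.ReflTransGen.refl)
  obtain ⟨f, hf, H, hHsub, hHk⟩ := hadd u hu w hw huwne
  have hfH : f ∈ H.edges := by
    by_contra hfH
    have : kappa H ≤ k := le_trans (le_kappabar (subgraph_addEdge_of_not_mem hHsub hfH)) hkbar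
    omega
  have hendsf : H.ends f = s(u, w) := by
    rw [hHsub.2.2 f hfH]
    exact addEdge_ends_self G f u w hu hw
  have huH : u ∈ H.verts := H.wf f hfH u (by rw [hendsf, Sym2.mem_iff]; left; rfl)
  have hwH : w ∈ H.verts := H.wf f hfH w (by rw [hendsf, Sym2.mem_iff]; right; rfl)
  set Z : Finset β := H.edges ∩ insert f X' with hZdef
  have hZcard : Z.card ≤ k := by
    have h1 : Z.card ≤ (insert f X').card := Finset.card_le_card Finset.inter_subset_right
    have h2 : (insert f X').card ≤ X'.card + 1 := Finset.card_insert_le _ _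
    have h3 : X'.card ≤ X.card := Finset.card_le_card hX'X
    omega
  have hnocross : ∀ g ∈ (H.deleteEdges Z).edges, ¬ Cross (↑A) ((H.deleteEdges Z).ends g) := by
    intro g hg hc
    have hg' : g ∈ H.edges \ Z := hg
    rw [Finset.mem_sdiff] at hg'
    have hcH : Cross (↑A) (H.ends g) := hc
    apply hg'.2
    refine Finset.mem_inter.mpr ⟨hg'.1, ?_⟩
    by_cases hgf : g = f
    · exact Finset.mem_insert.mpr (Or.inl hgf)
    · have hgG : g ∈ G.edges := by
        rcases Finset.mem_insert.mp (hHsub.2.1 hg'.1) with h | h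
        · exact absurd h hgf
        · exact h
      have hge : H.ends g = G.ends g := by
        rw [hHsub.2.2 g hg'.1]
        exact addEdge_ends_other G f u w hu hw hgf
      refine Finset.mem_insert.mpr (Or.inr ?_)
      exact Finset.mem_filter.mpr ⟨hgG, hge ▸ hcH⟩
  have hnoreach : ¬ (H.deleteEdges Z).Reach u w := by
    intro hr
    have : (w : α) ∈ (↑A : Set α) := reach_stays hnocross hr (by exact_mod_cast huA)
    exact hwA (by exact_mod_cast this)
  have : kappa H ≤ Z.card :=
    kappa_le Finset.inter_subset_left (not_connected_of huH hwH hnoreach)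
  omega

/-- The descent of the add-edge property to one side of a small cut. -/
lemma good_restrict {G : MG α β} {k : ℕ} (hkbar : kappabar G ≤ k) (hadd : GoodAdd k G)
    {S : Finset α} (hSsub : S ⊆ G.verts) {X' : Finset β} (hX'card : X'.card ≤ k)
    (hcrossX : ∀ g ∈ G.edges, Cross (↑S) (G.ends g) → g ∈ X') :
    GoodAdd k (G.restrict S) := by
  intro a' ha'' b' hb'' hne'
  have ha' : a' ∈ S := ha''
  have hb' : b' ∈ S := hb''
  obtain ⟨f, hf, H, hHsub, hHk⟩ := hadd a' (hSsub ha') b' (hSsub hb') hne'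
  have hf' : f ∉ (G.restrict S).edges := fun h => hf (mem_restrict_edges.mp h).1
  refine ⟨f, hf', H, ?_, hHk⟩
  have hfH : f ∈ H.edges := by
    by_contra hfH
    have : kappa H ≤ k := le_trans (le_kappabar (subgraph_addEdge_of_not_mem hHsub hfH)) hkbar
    omega
  have hendsf : H.ends f = s(a', b') := by
    rw [hHsub.2.2 f hfH]
    exact addEdge_ends_self G f a' b' (hSsub ha') (hSsub hb')
  have haH : a' ∈ H.verts := H.wf f hfH a' (by rw [hendsf, Sym2.mem_iff]; left; rfl)
  -- every vertex of H lies in S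
  have hHS : ∀ v ∈ H.verts, v ∈ S := by
    intro v hv
    by_contra hvS
    set Z : Finset β := H.edges ∩ X' with hZdef
    have hZcard : Z.card ≤ k :=
      le_trans (Finset.card_le_card Finset.inter_subset_right) hX'card
    have hnocross : ∀ g ∈ (H.deleteEdges Z).edges,
        ¬ Cross (↑S) ((H.deleteEdges Z).ends g) := by
      intro g hg hc
      have hg' : g ∈ H.edges \ Z := hg
      rw [Finset.mem_sdiff] at hg'
      have hcH : Cross (↑S) (H.ends g) := hc
      by_cases hgf : g = f
      · subst hgf
        obtain ⟨p, q, hpq, hp, hq⟩ := hcH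
        rw [hendsf] at hpq
        rcases Sym2.eq_iff.mp hpq.symm with ⟨rfl, rfl⟩ | ⟨rfl, rfl⟩
        · exact hq (by exact_mod_cast hb')
        · exact hq (by exact_mod_cast ha')
      · have hgG : g ∈ G.edges := by
          rcases Finset.mem_insert.mp (hHsub.2.1 hg'.1) with h | h
          · exact absurd h hgf
          · exact h
        have hge : H.ends g = G.ends g := by
          rw [hHsub.2.2 g hg'.1]
          exact addEdge_ends_other G f a' b' (hSsub ha') (hSsub hb') hgf
        exact hg'.2 (Finset.mem_inter.mpr ⟨hg'.1, hcrossX g hgG (hge ▸ hcH)⟩)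
    have hnoreach : ¬ (H.deleteEdges Z).Reach a' v := by
      intro hr
      have : (v : α) ∈ (↑S : Set α) := reach_stays hnocross hr (by exact_mod_cast ha')
      exact hvS (by exact_mod_cast this)
    have : kappa H ≤ Z.card :=
      kappa_le Finset.inter_subset_left (not_connected_of haH hv hnoreach)
    omega
  -- rebuild the subgraph relation into the restricted graph
  refine ⟨?_, ?_, ?_⟩
  · intro v hv
    exact hHS v hv
  · intro g hg
    by_cases hgf : g = f
    · subst hgf; exact Finset.mem_insert_self _ _
    · have hgG : g ∈ G.edges := by
        rcases Finset.mem_insert.mp (hHsub.2.1 hg) with h | h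
        · exact absurd h hgf
        · exact h
      have hge : H.ends g = G.ends g := by
        rw [hHsub.2.2 g hg]
        exact addEdge_ends_other G f a' b' (hSsub ha') (hSsub hb') hgf
      refine Finset.mem_insert_of_mem (mem_restrict_edges.mpr ⟨hgG, ?_⟩)
      intro v hv
      exact hHS v (H.wf g hg v (hge ▸ hv))
  · intro g hg
    rw [hHsub.2.2 g hg]
    rfl

end MG
namespace MG
variable {α β : Type} [DecidableEq α] [DecidableEq β]

/-- Main forward lemma: `κ̄' ≤ k` plus the add-edge property give `k` edge-disjoint
spanning trees. -/
lemma lemB : ∀ (n : ℕ) (G : MG α β), G.verts.card ≤ n → G.verts.Nonempty →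
    ∀ {k : ℕ}, kappabar G ≤ k → GoodAdd k G → G.HasTrees k := by
  intro n
  induction n with
  | zero =>
      intro G hn hvne k _ _
      have := Finset.card_pos.mpr hvne
      omega
  | succ n IH =>
    intro G hn hvne k hkbar hadd
    rcases Nat.eq_zero_or_pos k with rfl | hkpos
    · exact hasTrees_zero G
    by_cases hv1 : G.verts.card ≤ 1
    · -- single vertex: trivial trees
      have hc1 : G.verts.card = 1 := le_antisymm hv1 (Finset.card_pos.mpr hvne)
      refine ⟨fun _ => ⟨G.verts, ∅, G.ends, fun e he => absurd he (Finset.notMem_empty e)⟩,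
        fun i => ?_, fun i j _ => ?_⟩
      · refine ⟨⟨Finset.Subset.refl _, Finset.empty_subset _,
          fun e he => absurd he (Finset.notMem_empty e)⟩, rfl, ⟨hvne, ?_⟩, by simp [hc1]⟩
        intro a ha b hb
        have : a = b := Finset.card_le_one.mp hv1 a ha b hb
        rw [this]
        exact Relation.ReflTransGen.refl
      · simp
    push_neg at hv1
    have h2 : 2 ≤ G.verts.card := hv1
    have hcuts := cuts_ge hvne hkbar hadd
    have hkap : kappa G ≤ k := le_trans (kappa_le_kappabar G) hkbar
    obtain ⟨Y, hYsub, hYcard, hYdisc⟩ := exists_cut h2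
    obtain ⟨u, hu, w, hw, huw⟩ := exists_unreachable hYdisc hvne
    set A : Finset α := G.verts.filter (fun v => (G.deleteEdges Y).Reach u v) with hAdef
    have hAsub : A ⊆ G.verts := Finset.filter_subset _ _
    have huA : u ∈ A := Finset.mem_filter.mpr ⟨hu, Relation.ReflTransGen.refl⟩
    have hwA : w ∉ A := fun h => huw (Finset.mem_filter.mp h).2
    set X' : Finset β := G.edges.filter (fun g => Cross (↑A) (G.ends g)) with hX'def
    have hX'sub : X' ⊆ G.edges := Finset.filter_subset _ _
    have hX'Y : X' ⊆ Y := by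
      intro g hgX
      obtain ⟨hgE, hgc⟩ := Finset.mem_filter.mp hgX
      exact cross_mem_del hgE ((cross_filter_equiv (fun v hv => G.wf g hgE v hv)).mp hgc)
    -- X' itself disconnects G
    have hnocross : ∀ g ∈ (G.deleteEdges X').edges,
        ¬ Cross (↑A) ((G.deleteEdges X').ends g) := by
      intro g hg hc
      have hg' : g ∈ G.edges \ X' := hg
      rw [Finset.mem_sdiff] at hg'
      exact hg'.2 (Finset.mem_filter.mpr ⟨hg'.1, hc⟩)
    have hX'disc : ¬ (G.deleteEdges X').Connected := by
      refine not_connected_of (G := G.deleteEdges X') hu hw ?_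
      intro hr
      have : (w : α) ∈ (↑A : Set α) := reach_stays hnocross hr (by exact_mod_cast huA)
      exact hwA (by exact_mod_cast this)
    have hX'k : X'.card = k := by
      have h1 : k ≤ X'.card := hcuts X' hX'sub hX'disc
      have h2' : X'.card ≤ Y.card := Finset.card_le_card hX'Y
      omega
    -- the complement side
    set S' : Finset α := G.verts \ A with hS'def
    have hS'sub : S' ⊆ G.verts := Finset.sdiff_subset
    have hwS' : w ∈ S' := Finset.mem_sdiff.mpr ⟨hw, hwA⟩
    -- descend to both sides
    have hgoodA : GoodAdd k (G.restrict A) :=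
      good_restrict hkbar hadd hAsub (le_of_eq hX'k)
        (fun g hg hc => Finset.mem_filter.mpr ⟨hg, hc⟩)
    have hgoodS' : GoodAdd k (G.restrict S') :=
      good_restrict hkbar hadd hS'sub (le_of_eq hX'k)
        (fun g hg hc => Finset.mem_filter.mpr
          ⟨hg, (cross_compl (fun v hv => G.wf g hg v hv)).mp hc⟩)
    have hkbarA : kappabar (G.restrict A) ≤ k :=
      le_trans (kappabar_mono (restrict_subgraph G hAsub)) hkbar
    have hkbarS' : kappabar (G.restrict S') ≤ k :=
      le_trans (kappabar_mono (restrict_subgraph G hS'sub)) hkbar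
    have hAcard : A.card < G.verts.card :=
      Finset.card_lt_card ⟨hAsub, fun hcon => hwA (hcon hw)⟩
    have hS'card : S'.card < G.verts.card :=
      Finset.card_lt_card ⟨hS'sub, fun hcon =>
        (Finset.mem_sdiff.mp (hcon (hAsub huA))).2 huA⟩
    obtain ⟨T1, hT1s, hT1d⟩ := IH (G.restrict A) (by rw [restrict_verts]; omega)
      ⟨u, huA⟩ hkbarA hgoodA
    obtain ⟨T2, hT2s, hT2d⟩ := IH (G.restrict S') (by rw [restrict_verts]; omega)
      ⟨w, hwS'⟩ hkbarS' hgoodS'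
    -- enumerate the crossing edges
    have hxe : X' ≃ Fin k := Finset.equivFinOfCardEq hX'k
    set x : Fin k → β := fun i => (hxe.symm i : β) with hxdef
    have hxmem : ∀ i, x i ∈ X' := fun i => (hxe.symm i).2
    have hxinj : Function.Injective x :=
      fun i j h => by
        have := Subtype.coe_injective h
        exact hxe.symm.injective this
    have hxG : ∀ i, x i ∈ G.edges := fun i => hX'sub (hxmem i)
    have hxcr : ∀ i, ∃ p q, G.ends (x i) = s(p, q) ∧ p ∈ A ∧ q ∉ A := by
      intro i
      obtain ⟨p, q, hpq, hp, hq⟩ := (Finset.mem_filter.mp (hxmem i)).2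
      exact ⟨p, q, hpq, by exact_mod_cast hp, fun h => hq (by exact_mod_cast h)⟩
    choose p q hpq hpA hqA using hxcr
    have hqS' : ∀ i, q i ∈ S' := fun i => Finset.mem_sdiff.mpr
      ⟨G.wf (x i) (hxG i) (q i) (by rw [hpq i, Sym2.mem_iff]; right; rfl), hqA i⟩
    -- facts about tree edges
    have hinA : ∀ i, ∀ g ∈ (T1 i).edges, ∀ v ∈ G.ends g, v ∈ A := by
      intro i g hg v hv
      exact (mem_restrict_edges.mp ((hT1s i).1.2.1 hg)).2 v hv
    have hinB : ∀ i, ∀ g ∈ (T2 i).edges, ∀ v ∈ G.ends g, v ∈ S' := by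
      intro i g hg v hv
      exact (mem_restrict_edges.mp ((hT2s i).1.2.1 hg)).2 v hv
    have hsubA : ∀ i, ∀ g ∈ (T1 i).edges, g ∈ G.edges :=
      fun i g hg => (mem_restrict_edges.mp ((hT1s i).1.2.1 hg)).1
    have hsubB : ∀ i, ∀ g ∈ (T2 i).edges, g ∈ G.edges :=
      fun i g hg => (mem_restrict_edges.mp ((hT2s i).1.2.1 hg)).1
    have hendsA : ∀ i, ∀ g ∈ (T1 i).edges, (T1 i).ends g = G.ends g :=
      fun i g hg => (hT1s i).1.2.2 g hg
    have hendsB : ∀ i, ∀ g ∈ (T2 i).edges, (T2 i).ends g = G.ends g :=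
      fun i g hg => (hT2s i).1.2.2 g hg
    have hAB : ∀ g, (∀ v ∈ G.ends g, v ∈ A) → (∀ v ∈ G.ends g, v ∈ S') → False := by
      intro g h1 h2
      obtain ⟨c, d, hcd⟩ := sym2_cases (G.ends g)
      have hc1 : c ∈ A := h1 c (by rw [hcd, Sym2.mem_iff]; left; rfl)
      have hc2 : c ∈ S' := h2 c (by rw [hcd, Sym2.mem_iff]; left; rfl)
      exact (Finset.mem_sdiff.mp hc2).2 hc1
    have hxnotA : ∀ i, ¬ ∀ v ∈ G.ends (x i), v ∈ A := by
      intro i h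
      exact hqA i (h (q i) (by rw [hpq i, Sym2.mem_iff]; right; rfl))
    have hxnotB : ∀ i, ¬ ∀ v ∈ G.ends (x i), v ∈ S' := by
      intro i h
      have := h (p i) (by rw [hpq i, Sym2.mem_iff]; left; rfl)
      exact (Finset.mem_sdiff.mp this).2 (hpA i)
    have hsubE : ∀ i, (T1 i).edges ∪ (T2 i).edges ∪ {x i} ⊆ G.edges := by
      intro i g hg
      rcases Finset.mem_union.mp hg with hg' | hg'
      · rcases Finset.mem_union.mp hg' with h | h
        · exact hsubA i g h
        · exact hsubB i g h
      · rw [Finset.mem_singleton.mp hg']; exact hxG i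
    -- the combined trees
    set Tr : Fin k → MG α β := fun i =>
      ⟨G.verts, (T1 i).edges ∪ (T2 i).edges ∪ {x i}, G.ends,
        fun g hg v hv => G.wf g (hsubE i hg) v hv⟩ with hTrdef
    have hcat : ∀ i, ∀ g ∈ (Tr i).edges,
        g ∈ (T1 i).edges ∨ g ∈ (T2 i).edges ∨ g = x i := by
      intro i g hg
      rcases Finset.mem_union.mp hg with hg' | hg'
      · rcases Finset.mem_union.mp hg' with h | h
        · exact Or.inl h
        · exact Or.inr (Or.inl h)
      · exact Or.inr (Or.inr (Finset.mem_singleton.mp hg'))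
    refine ⟨Tr, fun i => ?_, fun i j hij => ?_⟩
    · -- spanning tree
      refine ⟨⟨Finset.Subset.refl _, hsubE i, fun g _ => rfl⟩, rfl, ?_, ?_⟩
      · -- connectivity
        have hadjx : (Tr i).Adj (q i) (p i) := by
          refine ⟨x i, Finset.mem_union.mpr (Or.inr (Finset.mem_singleton.mpr rfl)), ?_⟩
          show G.ends (x i) = s(q i, p i)
          rw [hpq i, Sym2.eq_swap]
        have hreachp : ∀ v ∈ G.verts, (Tr i).Reach v (p i) := by
          intro v hv
          by_cases hvA : v ∈ A
          · have hr : (T1 i).Reach v (p i) := by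
              have hconn := (hT1s i).2.2.1
              have hverts : (T1 i).verts = A := (hT1s i).2.1
              exact hconn.2 v (by rw [hverts]; exact hvA) (p i) (by rw [hverts]; exact hpA i)
            refine reach_mono ?_ hr
            intro c d ⟨g, hg, hge⟩
            exact ⟨g, Finset.mem_union.mpr (Or.inl (Finset.mem_union.mpr (Or.inl hg))),
              by rw [show (Tr i).ends g = G.ends g from rfl, ← hendsA i g hg]; exact hge⟩
          · have hvS' : v ∈ S' := Finset.mem_sdiff.mpr ⟨hv, hvA⟩
            have hr : (T2 i).Reach v (q i) := by
              have hconn := (hT2s i).2.2.1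
              have hverts : (T2 i).verts = S' := (hT2s i).2.1
              exact hconn.2 v (by rw [hverts]; exact hvS') (q i) (by rw [hverts]; exact hqS' i)
            have hr' : (Tr i).Reach v (q i) := by
              refine reach_mono ?_ hr
              intro c d ⟨g, hg, hge⟩
              exact ⟨g, Finset.mem_union.mpr (Or.inl (Finset.mem_union.mpr (Or.inr hg))),
                by rw [show (Tr i).ends g = G.ends g from rfl, ← hendsB i g hg]; exact hge⟩
            exact hr'.tail hadjx
        exact ⟨⟨u, hu⟩, fun c hc d hd =>
          (hreachp c hc).trans (reach_symm (hreachp d hd))⟩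
      · -- edge count
        have hd12 : Disjoint (T1 i).edges (T2 i).edges := by
          rw [Finset.disjoint_left]
          intro g hg hg'
          exact hAB g (hinA i g hg) (hinB i g hg')
        have hdx : x i ∉ (T1 i).edges ∪ (T2 i).edges := by
          intro h
          rcases Finset.mem_union.mp h with h' | h'
          · exact hxnotA i (hinA i (x i) h')
          · exact hxnotB i (hinB i (x i) h')
        have hcardu : (Tr i).edges.card = (T1 i).edges.card + (T2 i).edges.card + 1 := by
          show ((T1 i).edges ∪ (T2 i).edges ∪ {x i}).card = _
          rw [Finset.card_union_of_disjoint (Finset.disjoint_singleton_right.mpr hdx),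
            Finset.card_union_of_disjoint hd12, Finset.card_singleton]
        have hc1 : (T1 i).edges.card = A.card - 1 := by
          have := (hT1s i).2.2.2
          rwa [(hT1s i).2.1, restrict_verts] at this
        have hc2 : (T2 i).edges.card = S'.card - 1 := by
          have := (hT2s i).2.2.2
          rwa [(hT2s i).2.1, restrict_verts] at this
        have hApos : 1 ≤ A.card := Finset.card_pos.mpr ⟨u, huA⟩
        have hS'pos : 1 ≤ S'.card := Finset.card_pos.mpr ⟨w, hwS'⟩
        have hsum : A.card + S'.card = G.verts.card := by
          rw [hS'def, Finset.card_sdiff_of_subset hAsub]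
          have := Finset.card_le_card hAsub
          omega
        show (Tr i).edges.card = G.verts.card - 1
        omega
    · -- pairwise disjoint
      rw [Finset.disjoint_left]
      intro g hgi hgj
      rcases hcat i g hgi with h1 | h1 | h1 <;> rcases hcat j g hgj with h2 | h2 | h2
      · exact Finset.disjoint_left.mp (hT1d i j hij) h1 h2
      · exact hAB g (hinA i g h1) (hinB j g h2)
      · subst h2; exact hxnotA j (hinA i (x j) h1)
      · exact hAB g (hinA j g h2) (hinB i g h1)
      · exact Finset.disjoint_left.mp (hT2d i j hij) h1 h2
      · subst h2; exact hxnotB j (hinB i (x j) h1)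
      · subst h1; exact hxnotA i (hinA j (x i) h2)
      · subst h1; exact hxnotB i (hinB j (x i) h2)
      · subst h1; exact hij (hxinj h2)

end MG
/-- A multigraph on `n ≥ 2` vertices is `k`-maximal iff `τ(G) = κ̄'(G) = k`. -/
theorem stmt13 {α β : Type} [DecidableEq α] [DecidableEq β] [Infinite β]
    (k : ℕ) (hk : 0 < k) (G : MG α β) (hn : 2 ≤ G.verts.card) :
    MG.IsKMaximal k G ↔ (MG.tau G = k ∧ MG.kappabar G = k) := by
  constructor
  · rintro ⟨hkbar, hmax⟩
    have hvne : G.verts.Nonempty := Finset.card_pos.mp (by omega)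
    have hadd : MG.GoodAdd k G := by
      intro a ha b hb hab
      obtain ⟨f, hf⟩ := Infinite.exists_notMem_finset G.edges
      have h1 := hmax f hf a b ha hb hab
      obtain ⟨H, hsub, hk'⟩ := MG.exists_kappabar_witness (G.addEdge f a b ha hb)
      exact ⟨f, hf, H, hsub, by rw [hk']; exact h1⟩
    have hT : G.HasTrees k := MG.lemB G.verts.card G le_rfl hvne hkbar hadd
    have hcuts := MG.cuts_ge hvne hkbar hadd
    have hkapge : k ≤ G.kappa := MG.le_kappa hn hcuts
    have hkaple : G.kappa ≤ k := le_trans (MG.kappa_le_kappabar G) hkbar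
    obtain ⟨Y, hYs, hYc, hYd⟩ := MG.exists_cut hn
    constructor
    · refine MG.tau_eq hT ?_
      intro m hm
      have h1 := MG.trees_le_cut hm hYs hYd
      omega
    · exact le_antisymm hkbar (le_trans hkapge (MG.kappa_le_kappabar G))
  · rintro ⟨htau, hkbar⟩
    refine ⟨le_of_eq hkbar, ?_⟩
    intro e he a b ha hb hab
    have hT : G.HasTrees k := by
      have h := MG.hasTrees_tau hn
      rwa [htau] at h
    obtain ⟨H, hsub, hk'⟩ := MG.lemA G.verts.card G le_rfl hT e he a b ha hb hab
    exact le_trans hk' (MG.le_kappabar hsub)
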